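/- In the one-dimensional split framework, let s* be a best split with Δ(s*) > 0. Then Ḡ(s*)² + Δ(s*) ≤ sup_{s ∈ [a,b]} Ḡ(s)² ≤ ω(g;[a,b])², where ω(g;[a,b]) = sup_{s,s' ∈ [a,b]} |g(s) − g(s')| is the oscillation of g on [a,b]. Moreover, if g is continuously differentiable on [a,b], then Ḡ(s*)² + Δ(s*) ≤ (∫_a^b |g′(s)| ds)². -/

import Mathlib

open MeasureTheory Set

noncomputable section

/-!
At an interior maximiser `s*` of `Δ = Ξ² / (P (1 - P))`, the first-order condition `Δ'(s*) = 0`,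
with `Ξ' = Ḡ p` and `P' = p`, reads `2 Ḡ P (1 - P) = Ξ (1 - 2P)`; since `(1 - 2P)² + 4P(1 - P) = 1`
it gives `Ḡ(s*)² + Δ(s*) = (Ξ / (2 P (1 - P)))²`. Because `Ξ(s) = ∫_a^s Ḡ p = -∫_s^b Ḡ p`,
`|Ξ| ≤ K min(P, 1 - P) ≤ 2 K P (1 - P)` with `K = max |Ḡ|`, so `Ḡ(s*)² + Δ(s*) ≤ K²`.
Finally `m` is a `p`-weighted average of `g`, so `|Ḡ| ≤ ω`, and `ω ≤ ∫_a^b |g'|`.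
-/

theorem ContinuousOn.intervalIntegrable_of_mem_Icc {f : ℝ → ℝ} {a b x y : ℝ}
    (hf : ContinuousOn f (Icc a b)) (hx : x ∈ Icc a b) (hy : y ∈ Icc a b) :
    IntervalIntegrable f volume x y :=
  (hf.mono (uIcc_subset_Icc hx hy)).intervalIntegrable

theorem ContinuousOn.hasDerivAt_integral_of_mem_Ioo {f : ℝ → ℝ} {a b s : ℝ}
    (hf : ContinuousOn f (Icc a b)) (hs : s ∈ Ioo a b) :
    HasDerivAt (fun t => ∫ u in a..t, f u) (f s) s :=
  intervalIntegral.integral_hasDerivAt_right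
    ((hf.mono (Icc_subset_Icc_right hs.2.le)).intervalIntegrable_of_Icc hs.1.le)
    ⟨Icc a b, Icc_mem_nhds hs.1 hs.2, hf.aestronglyMeasurable measurableSet_Icc⟩
    (hf.continuousAt (Icc_mem_nhds hs.1 hs.2))

theorem abs_integral_mul_sub_le {f p : ℝ → ℝ} {x y m K : ℝ} (hxy : x ≤ y)
    (hp : ∀ u ∈ Icc x y, 0 ≤ p u) (hpi : IntervalIntegrable p volume x y)
    (hfpi : IntervalIntegrable (fun u => f u * p u) volume x y)
    (hK : ∀ u ∈ Icc x y, |f u - m| ≤ K) :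
    |(∫ u in x..y, f u * p u) - m * ∫ u in x..y, p u| ≤ K * ∫ u in x..y, p u := by
  have hmpi : IntervalIntegrable (fun u => m * p u) volume x y := hpi.const_mul m
  rw [← intervalIntegral.integral_const_mul m p, ← intervalIntegral.integral_sub hfpi hmpi,
    ← intervalIntegral.integral_const_mul K p, ← Real.norm_eq_abs]
  refine intervalIntegral.norm_integral_le_of_norm_le hxy (ae_of_all _ fun u hu => ?_)
    (hpi.const_mul K)
  have hu' : u ∈ Icc x y := Ioc_subset_Icc_self hu
  rw [Real.norm_eq_abs, ← sub_mul, abs_mul, abs_of_nonneg (hp u hu')]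
  exact mul_le_mul_of_nonneg_right (hK u hu') (hp u hu')

def oscillationOn {α : Type*} (g : α → ℝ) (S : Set α) : ℝ :=
  sSup ((fun q : α × α => |g q.1 - g q.2|) '' (S ×ˢ S))

theorem abs_sub_le_oscillationOn {α : Type*} [TopologicalSpace α] {g : α → ℝ} {S : Set α}
    {x y : α} (hS : IsCompact S) (hg : ContinuousOn g S) (hx : x ∈ S) (hy : y ∈ S) :
    |g x - g y| ≤ oscillationOn g S := by
  have hcont : ContinuousOn (fun q : α × α => |g q.1 - g q.2|) (S ×ˢ S) :=
    ((hg.comp continuousOn_fst fun _ hq => hq.1).sub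
      (hg.comp continuousOn_snd fun _ hq => hq.2)).abs
  exact le_csSup ((hS.prod hS).bddAbove_image hcont) ⟨(x, y), ⟨hx, hy⟩, rfl⟩

theorem oscillationOn_le {α : Type*} {g : α → ℝ} {S : Set α} {C : ℝ} (hS : S.Nonempty)
    (h : ∀ x ∈ S, ∀ y ∈ S, |g x - g y| ≤ C) : oscillationOn g S ≤ C :=
  csSup_le ((hS.prod hS).image _) (by rintro _ ⟨⟨x, y⟩, ⟨hx, hy⟩, rfl⟩; exact h x hx y hy)

theorem oscillationOn_Icc_le_integral_abs_deriv {g g' : ℝ → ℝ} {a b : ℝ} (hab : a ≤ b)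
    (hderiv : ∀ s ∈ Icc a b, HasDerivWithinAt g (g' s) (Icc a b) s)
    (hg' : ContinuousOn g' (Icc a b)) :
    oscillationOn g (Icc a b) ≤ ∫ s in a..b, |g' s| := by
  have hg : ContinuousOn g (Icc a b) := fun s hs => (hderiv s hs).continuousWithinAt
  have hderiv' : ∀ t ∈ Ioo a b, HasDerivAt g (g' t) t := fun t ht =>
    (hderiv t (Ioo_subset_Icc_self ht)).hasDerivAt (Icc_mem_nhds ht.1 ht.2)
  have hmono : ∀ x ∈ Icc a b, ∀ y ∈ Icc a b, x ≤ y → |g y - g x| ≤ ∫ s in a..b, |g' s| := by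
    intro x hx y hy hxy
    have hsub : Ioo x y ⊆ Ioo a b := Ioo_subset_Ioo hx.1 hy.2
    calc |g y - g x| ≤ ∫ s in x..y, |g' s| :=
          norm_sub_le_integral_of_norm_deriv_le_of_le hxy (hg.mono (Icc_subset_Icc hx.1 hy.2))
            (fun t ht => (hderiv' t (hsub ht)).differentiableAt.differentiableWithinAt)
            (ae_of_all _ fun t ht => by rw [(hderiv' t (hsub ht)).deriv, Real.norm_eq_abs])
            (hg'.abs.intervalIntegrable_of_mem_Icc hx hy)
      _ ≤ ∫ s in a..b, |g' s| :=
          intervalIntegral.integral_mono_interval hx.1 hxy hy.2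
            (ae_of_all _ fun _ => abs_nonneg _) (hg'.abs.intervalIntegrable_of_Icc hab)
  refine oscillationOn_le ⟨a, left_mem_Icc.2 hab⟩ fun x hx y hy => ?_
  rcases le_total x y with hxy | hyx
  · exact abs_sub_comm (g x) (g y) ▸ hmono x hx y hy hxy
  · exact hmono y hy x hx hyx

theorem sq_add_sq_div_eq_sq_div {c x t : ℝ} (ht : t * (1 - t) ≠ 0)
    (h : 2 * c * (t * (1 - t)) = x * (1 - 2 * t)) :
    c ^ 2 + x ^ 2 / (t * (1 - t)) = (x / (2 * (t * (1 - t)))) ^ 2 := by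
  obtain rfl : c = x * (1 - 2 * t) / (2 * (t * (1 - t))) :=
    (eq_div_iff (mul_ne_zero two_ne_zero ht)).2 (by linarith)
  field_simp
  ring

theorem sq_div_two_mul_mul_one_sub_le {x t K : ℝ} (ht₀ : 0 < t) (ht₁ : t < 1)
    (hx₀ : |x| ≤ K * t) (hx₁ : |x| ≤ K * (1 - t)) :
    (x / (2 * (t * (1 - t)))) ^ 2 ≤ K ^ 2 := by
  have hK : 0 ≤ K := nonneg_of_mul_nonneg_left ((abs_nonneg x).trans hx₀) ht₀
  -- `min t (1 - t) ≤ 2 t (1 - t)` on `[0, 1]`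
  have hx : |x| ≤ K * (2 * (t * (1 - t))) := by
    rcases le_total t (1 / 2) with ht | ht
    · nlinarith [mul_nonneg (mul_nonneg hK ht₀.le) (by linarith : (0 : ℝ) ≤ 1 - 2 * t)]
    · nlinarith [mul_nonneg (mul_nonneg hK (by linarith : (0 : ℝ) ≤ 1 - t))
        (by linarith : (0 : ℝ) ≤ 2 * t - 1)]
  have ht : 0 < t * (1 - t) := mul_pos ht₀ (by linarith)
  rw [div_pow, div_le_iff₀ (by positivity), ← mul_pow, ← sq_abs x]
  exact pow_le_pow_left₀ (abs_nonneg x) hx 2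

theorem hasDerivAt_impurity {P Xi Δ : ℝ → ℝ} {s p c : ℝ} (hP : HasDerivAt P p s)
    (hXi : HasDerivAt Xi (c * p) s) (hD : P s * (1 - P s) ≠ 0)
    (hΔ : ∀ t, Δ t = Xi t ^ 2 / (P t * (1 - P t))) :
    HasDerivAt Δ
      (p * Xi s * (2 * c * (P s * (1 - P s)) - Xi s * (1 - 2 * P s)) / (P s * (1 - P s)) ^ 2) s := by
  rw [funext hΔ]
  refine ((hXi.fun_pow 2).fun_div (hP.fun_mul (hP.const_sub 1)) hD).congr_deriv ?_
  push_cast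
  ring

theorem IsLocalMax.two_mul_mul_eq_of_impurity {P Xi Δ : ℝ → ℝ} {s p c : ℝ}
    (hmax : IsLocalMax Δ s) (hP : HasDerivAt P p s) (hXi : HasDerivAt Xi (c * p) s)
    (hD : P s * (1 - P s) ≠ 0) (hΔ : ∀ t, Δ t = Xi t ^ 2 / (P t * (1 - P t)))
    (hp : p ≠ 0) (hXis : Xi s ≠ 0) :
    2 * c * (P s * (1 - P s)) = Xi s * (1 - 2 * P s) := by
  have h := hmax.hasDerivAt_eq_zero (hasDerivAt_impurity hP hXi hD hΔ)
  rwa [div_eq_zero_iff, or_iff_left (pow_ne_zero 2 hD), mul_eq_zero,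
    or_iff_right (mul_ne_zero hp hXis), sub_eq_zero] at h

theorem cumulative_mem_Ioo {a b s : ℝ} {p P : ℝ → ℝ} (hp_cont : ContinuousOn p (Icc a b))
    (hp_pos : ∀ u ∈ Icc a b, 0 < p u) (hp_one : (∫ u in a..b, p u) = 1)
    (hP : ∀ s, P s = ∫ u in a..s, p u) (hs : s ∈ Ioo a b) : P s ∈ Ioo 0 1 := by
  have ha : a ∈ Icc a b := left_mem_Icc.2 (hs.1.trans hs.2).le
  have hb : b ∈ Icc a b := right_mem_Icc.2 (hs.1.trans hs.2).le
  have hs' : s ∈ Icc a b := Ioo_subset_Icc_self hs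
  have hleft : 0 < ∫ u in a..s, p u :=
    intervalIntegral.intervalIntegral_pos_of_pos_on (hp_cont.intervalIntegrable_of_mem_Icc ha hs')
      (fun u hu => hp_pos u ⟨hu.1.le, hu.2.le.trans hs'.2⟩) hs.1
  have hright : 0 < ∫ u in s..b, p u :=
    intervalIntegral.intervalIntegral_pos_of_pos_on (hp_cont.intervalIntegrable_of_mem_Icc hs' hb)
      (fun u hu => hp_pos u ⟨hs'.1.trans hu.1.le, hu.2.le⟩) hs.2
  rw [← intervalIntegral.integral_interval_sub_left (hp_cont.intervalIntegrable_of_mem_Icc ha hb)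
    (hp_cont.intervalIntegrable_of_mem_Icc ha hs'), hp_one] at hright
  rw [hP]
  exact ⟨hleft, by linarith⟩

theorem hasDerivAt_centered_cumulative {a b s : ℝ} {p g P M Xi : ℝ → ℝ}
    (hp_cont : ContinuousOn p (Icc a b)) (hg_cont : ContinuousOn g (Icc a b))
    (hP : ∀ s, P s = ∫ u in a..s, p u) (hM : ∀ s, M s = ∫ u in a..s, g u * p u)
    (hXi : ∀ s, Xi s = M s - M b * P s) (hs : s ∈ Ioo a b) :
    HasDerivAt Xi ((g s - M b) * p s) s := by
  have hP' : HasDerivAt P (p s) s := by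
    rw [funext hP]
    exact hp_cont.hasDerivAt_integral_of_mem_Ioo hs
  have hM' : HasDerivAt M (g s * p s) s := by
    rw [funext hM]
    exact (hg_cont.mul hp_cont).hasDerivAt_integral_of_mem_Ioo hs
  rw [funext hXi]
  exact (hM'.sub (hP'.const_mul (M b))).congr_deriv (by ring)

theorem abs_centered_cumulative_le {a b s K : ℝ} {p g P M Xi : ℝ → ℝ}
    (hp_cont : ContinuousOn p (Icc a b)) (hp_pos : ∀ u ∈ Icc a b, 0 < p u)
    (hp_one : (∫ u in a..b, p u) = 1) (hg_cont : ContinuousOn g (Icc a b))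
    (hP : ∀ s, P s = ∫ u in a..s, p u) (hM : ∀ s, M s = ∫ u in a..s, g u * p u)
    (hXi : ∀ s, Xi s = M s - M b * P s) (hs : s ∈ Icc a b)
    (hK : ∀ u ∈ Icc a b, |g u - M b| ≤ K) :
    |Xi s| ≤ K * P s ∧ |Xi s| ≤ K * (1 - P s) := by
  have ha : a ∈ Icc a b := left_mem_Icc.2 (hs.1.trans hs.2)
  have hb : b ∈ Icc a b := right_mem_Icc.2 (hs.1.trans hs.2)
  have hgp_cont : ContinuousOn (fun u => g u * p u) (Icc a b) := hg_cont.mul hp_cont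
  have hbound : ∀ x ∈ Icc a b, ∀ y ∈ Icc a b, x ≤ y →
      |(∫ u in x..y, g u * p u) - M b * ∫ u in x..y, p u| ≤ K * ∫ u in x..y, p u :=
    fun x hx y hy hxy => abs_integral_mul_sub_le hxy
      (fun u hu => (hp_pos u (Icc_subset_Icc hx.1 hy.2 hu)).le)
      (hp_cont.intervalIntegrable_of_mem_Icc hx hy) (hgp_cont.intervalIntegrable_of_mem_Icc hx hy)
      (fun u hu => hK u (Icc_subset_Icc hx.1 hy.2 hu))
  have hleft := hbound a ha s hs hs.1
  have hright := hbound s hs b hb hs.2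
  rw [← hM s, ← hP s] at hleft
  rw [← intervalIntegral.integral_interval_sub_left (hgp_cont.intervalIntegrable_of_mem_Icc ha hb)
      (hgp_cont.intervalIntegrable_of_mem_Icc ha hs),
    ← intervalIntegral.integral_interval_sub_left (hp_cont.intervalIntegrable_of_mem_Icc ha hb)
      (hp_cont.intervalIntegrable_of_mem_Icc ha hs), hp_one, ← hM b, ← hM s, ← hP s] at hright
  have hflip : M s - M b * P s = -((M b - M s) - M b * (1 - P s)) := by ring
  rw [hXi]
  refine ⟨hleft, ?_⟩
  rwa [hflip, abs_neg]

theorem abs_sub_mean_le {a b s C : ℝ} {p g M : ℝ → ℝ}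
    (hp_cont : ContinuousOn p (Icc a b)) (hp_pos : ∀ u ∈ Icc a b, 0 < p u)
    (hp_one : (∫ u in a..b, p u) = 1) (hg_cont : ContinuousOn g (Icc a b))
    (hM : ∀ s, M s = ∫ u in a..s, g u * p u) (hs : s ∈ Icc a b)
    (hC : ∀ u ∈ Icc a b, |g u - g s| ≤ C) : |g s - M b| ≤ C := by
  have hab : a ≤ b := hs.1.trans hs.2
  have h := abs_integral_mul_sub_le hab (fun u hu => (hp_pos u hu).le)
    (hp_cont.intervalIntegrable_of_Icc hab) ((hg_cont.mul hp_cont).intervalIntegrable_of_Icc hab) hC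
  rwa [hp_one, mul_one, mul_one, ← hM, abs_sub_comm] at h

theorem sq_centered_add_impurity_le_of_isMaxOn {a b sstar K : ℝ} {p g P M Xi Δ : ℝ → ℝ}
    (hp_cont : ContinuousOn p (Icc a b)) (hp_pos : ∀ u ∈ Icc a b, 0 < p u)
    (hp_one : (∫ u in a..b, p u) = 1) (hg_cont : ContinuousOn g (Icc a b))
    (hP : ∀ s, P s = ∫ u in a..s, p u) (hM : ∀ s, M s = ∫ u in a..s, g u * p u)
    (hXi : ∀ s, Xi s = M s - M b * P s) (hΔ : ∀ s, Δ s = Xi s ^ 2 / (P s * (1 - P s)))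
    (hmem : sstar ∈ Icc a b) (hmax : ∀ s ∈ Icc a b, Δ s ≤ Δ sstar) (hpos : 0 < Δ sstar)
    (hK : ∀ u ∈ Icc a b, |g u - M b| ≤ K) :
    (g sstar - M b) ^ 2 + Δ sstar ≤ K ^ 2 := by
  have hs : sstar ∈ Ioo a b := by
    refine ⟨hmem.1.lt_of_ne ?_, hmem.2.lt_of_ne ?_⟩ <;> rintro rfl <;>
      simp [hΔ, hXi, hP, hM, hp_one] at hpos
  obtain ⟨hP₀, hP₁⟩ := cumulative_mem_Ioo hp_cont hp_pos hp_one hP hs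
  have hD : 0 < P sstar * (1 - P sstar) := mul_pos hP₀ (sub_pos.2 hP₁)
  have hXi₀ : Xi sstar ≠ 0 := fun h => by simp [hΔ, h] at hpos
  have hfoc := IsLocalMax.two_mul_mul_eq_of_impurity
    (Filter.eventually_of_mem (Icc_mem_nhds hs.1 hs.2) hmax)
    (funext hP ▸ hp_cont.hasDerivAt_integral_of_mem_Ioo hs)
    (hasDerivAt_centered_cumulative hp_cont hg_cont hP hM hXi hs) hD.ne' hΔ
    (hp_pos _ hmem).ne' hXi₀
  obtain ⟨hleft, hright⟩ :=
    abs_centered_cumulative_le hp_cont hp_pos hp_one hg_cont hP hM hXi hmem hK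
  rw [hΔ, sq_add_sq_div_eq_sq_div hD.ne' hfoc]
  exact sq_div_two_mul_mul_one_sub_le hP₀ hP₁ hleft hright

theorem best_split_oscillation_bound_general
    (a b : ℝ)
    (p g : ℝ → ℝ)
    (hp_cont : ContinuousOn p (Set.Icc a b))
    (hp_pos : ∀ u ∈ Set.Icc a b, 0 < p u)
    (hp_one : (∫ u in a..b, p u) = 1)
    (hg_cont : ContinuousOn g (Set.Icc a b))
    (P M Xi G Δ : ℝ → ℝ)
    (hP : ∀ s, P s = ∫ u in a..s, p u)
    (hM : ∀ s, M s = ∫ u in a..s, g u * p u)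
    (hXi : ∀ s, Xi s = M s - M b * P s)
    (hG : ∀ s, G s = g s - M b)
    (hΔ : ∀ s, Δ s = Xi s ^ 2 / (P s * (1 - P s)))
    (sstar : ℝ) (hmem : sstar ∈ Set.Icc a b)
    (hmax : ∀ s ∈ Set.Icc a b, Δ s ≤ Δ sstar)
    (hpos : 0 < Δ sstar)
    (ω : ℝ) (hω : ω = sSup ((fun q : ℝ × ℝ => |g q.1 - g q.2|) '' (Set.Icc a b ×ˢ Set.Icc a b))) :
    (G sstar ^ 2 + Δ sstar ≤ sSup ((fun s => G s ^ 2) '' Set.Icc a b) ∧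
      sSup ((fun s => G s ^ 2) '' Set.Icc a b) ≤ ω ^ 2) ∧
    (∀ g' : ℝ → ℝ, (∀ s ∈ Set.Icc a b, HasDerivWithinAt g (g' s) (Set.Icc a b) s) →
      ContinuousOn g' (Set.Icc a b) →
      G sstar ^ 2 + Δ sstar ≤ (∫ s in a..b, |g' s|) ^ 2) := by
  have hG_cont : ContinuousOn G (Icc a b) := funext hG ▸ hg_cont.sub continuousOn_const
  obtain ⟨s₀, hs₀, hs₀_max⟩ := isCompact_Icc.exists_isMaxOn ⟨sstar, hmem⟩ hG_cont.abs
  have hG_le : ∀ s ∈ Icc a b, |G s| ≤ ω := fun s hs => hG s ▸ hω ▸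
    abs_sub_mean_le hp_cont hp_pos hp_one hg_cont hM hs fun u hu =>
      abs_sub_le_oscillationOn isCompact_Icc hg_cont hu hs
  have hfirst : G sstar ^ 2 + Δ sstar ≤ sSup ((fun s => G s ^ 2) '' Icc a b) :=
    calc G sstar ^ 2 + Δ sstar ≤ |G s₀| ^ 2 := hG sstar ▸
          sq_centered_add_impurity_le_of_isMaxOn hp_cont hp_pos hp_one hg_cont hP hM hXi hΔ hmem
            hmax hpos fun u hu => hG u ▸ hs₀_max hu
      _ = G s₀ ^ 2 := sq_abs _
      _ ≤ _ := le_csSup (isCompact_Icc.bddAbove_image (hG_cont.pow 2)) ⟨s₀, hs₀, rfl⟩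
  have hsecond : sSup ((fun s => G s ^ 2) '' Icc a b) ≤ ω ^ 2 :=
    csSup_le ⟨_, mem_image_of_mem _ hmem⟩ (forall_mem_image.2 fun s hs =>
      sq_abs (G s) ▸ pow_le_pow_left₀ (abs_nonneg _) (hG_le s hs) 2)
  refine ⟨⟨hfirst, hsecond⟩, fun g' hg' hg'_cont => hfirst.trans (hsecond.trans ?_)⟩
  exact pow_le_pow_left₀ ((abs_nonneg _).trans (hG_le sstar hmem))
    (hω ▸ oscillationOn_Icc_le_integral_abs_deriv (hmem.1.trans hmem.2) hg' hg'_cont) 2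

/-- For a best split `s*` with `Δ(s*) > 0`,
`Ḡ(s*)² + Δ(s*) ≤ sup_{s∈[a,b]} Ḡ(s)² ≤ ω(g;[a,b])²`, and if `g` is `C¹` on `[a,b]`
then `Ḡ(s*)² + Δ(s*) ≤ (∫_a^b |g′|)²`. -/
theorem best_split_oscillation_bound
    (a b : ℝ) (hab : a < b)
    (p g : ℝ → ℝ)
    (hp_cont : ContinuousOn p (Set.Icc a b))
    (hp_pos : ∀ u ∈ Set.Icc a b, 0 < p u)
    (hp_one : (∫ u in a..b, p u) = 1)
    (hg_cont : ContinuousOn g (Set.Icc a b))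
    (P M Xi G Δ : ℝ → ℝ)
    (hP : ∀ s, P s = ∫ u in a..s, p u)
    (hM : ∀ s, M s = ∫ u in a..s, g u * p u)
    (hXi : ∀ s, Xi s = M s - M b * P s)
    (hG : ∀ s, G s = g s - M b)
    (hΔ : ∀ s, Δ s = Xi s ^ 2 / (P s * (1 - P s)))
    (sstar : ℝ) (hmem : sstar ∈ Set.Icc a b)
    (hmax : ∀ s ∈ Set.Icc a b, Δ s ≤ Δ sstar)
    (hpos : 0 < Δ sstar)
    (ω : ℝ) (hω : ω = sSup ((fun q : ℝ × ℝ => |g q.1 - g q.2|) '' (Set.Icc a b ×ˢ Set.Icc a b))) :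
    (G sstar ^ 2 + Δ sstar ≤ sSup ((fun s => G s ^ 2) '' Set.Icc a b) ∧
      sSup ((fun s => G s ^ 2) '' Set.Icc a b) ≤ ω ^ 2) ∧
    (∀ g' : ℝ → ℝ, (∀ s ∈ Set.Icc a b, HasDerivWithinAt g (g' s) (Set.Icc a b) s) →
      ContinuousOn g' (Set.Icc a b) →
      G sstar ^ 2 + Δ sstar ≤ (∫ s in a..b, |g' s|) ^ 2) :=
  best_split_oscillation_bound_general a b p g hp_cont hp_pos hp_one hg_cont P M Xi G Δ hP hM hXi hG
    hΔ sstar hmem hmax hpos ω hω
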